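/- For every i ∈ I, T_i(Â_{<0}) = Σ_{k≥0} f_{i,0}^k · Â_{<0}, i.e. the image under T_i of the subalgebra Â_{<0} equals the sum over k ≥ 0 of the left translates of Â_{<0} by the powers f_{i,0}^k. -/

import Mathlib

/-!
`T_i` sends every generator of `Â_{<0}` into `Â_{<0}`, except `f_{i,-1} ↦ f_{i,0}`. Moving
`f_{i,0}` to the left past a generator `f_{j,m}`, `m < 0`, costs only a scalar and a constant
term (q-boson relation), so `Σ_k f_{i,0}^k Â_{<0}` is stable under left multiplication by
`T_i(Â_{<0})`; this gives `⊆`.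

Conversely `f_{i,m+1} = T_i(f_{i,m})`, so it remains to recover `f_{j,m}` (`j ≠ i`, `m < 0`) from
`T_i(f_{j,m}) = Σ_{r+s=n} (-q_i)^s F_{i,m}^{(r)} f_{j,m} F_{i,m}^{(s)}`, `n = -c_{ij}`. Since
`f_{i,m} f_{i,m+1} = q_i^2 f_{i,m+1} f_{i,m} + 1 - q_i^2` and `f_{j,m} f_{i,m+1}` q-commute, a
suitable q-twisted commutator with `f_{i,m+1}` lowers the `f_{i,m}`-degree of each
`f_{i,m}^r f_{j,m} f_{i,m}^s` by one. After `n` such commutators one is left with an explicit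
multiple of `f_{j,m}`, whose coefficient is a product of factors `1 - q_i^{2a}` and is nonzero.
-/

noncomputable section
open scoped Classical
open Finset

/-! ## The base field `k = ℚ(q^{1/2})` -/

/-- The base field `k = ℚ(q^{1/2})`, realized as the field of rational functions over `ℚ`
in the variable `vv`, which plays the role of the formal square root `q^{1/2}`. -/
abbrev kk : Type := RatFunc ℚ

/-- The formal square root `q^{1/2}`. -/
def vv : kk := RatFunc.X

/-- The quantum parameter `q = (q^{1/2})^2`. -/
def qq : kk := vv ^ 2

/-- The quantum integer `[n]_t = t^{n-1} + t^{n-3} + ⋯ + t^{1-n}`. -/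
def qint (t : kk) (n : ℕ) : kk := ∑ k ∈ Finset.range n, t ^ ((n : ℤ) - 1 - 2 * (k : ℤ))

/-- The quantum factorial `[n]_t!`. -/
def qfact (t : kk) (n : ℕ) : kk := ∏ s ∈ Finset.range n, qint t (s + 1)

/-- The quantum binomial coefficient `[m choose k]_t`. -/
def qbinom (t : kk) (m k : ℕ) : kk := qfact t m / (qfact t k * qfact t (m - k))

/-! ## Cartan data -/

/-- A symmetrizable generalized Cartan matrix together with symmetrizers. -/
structure CartanDatum (I : Type) [Fintype I] [DecidableEq I] where
  c : I → I → ℤ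
  d : I → ℤ
  d_pos : ∀ i, 0 < d i
  c_diag : ∀ i, c i i = 2
  c_offdiag : ∀ i j, i ≠ j → c i j ≤ 0
  symm : ∀ i j, d i * c i j = d j * c j i

variable {I : Type} [Fintype I] [DecidableEq I]

/-- The simple root `α_i` as an element of the root lattice `Q = I → ℤ`. -/
def alphaF (i : I) : I → ℤ := fun j => if j = i then 1 else 0

/-- The symmetric bilinear form on the root lattice, `(α_i, α_j) = d_i c_{ij}`. -/
def CartanDatum.form (A : CartanDatum I) (α β : I → ℤ) : ℤ :=
  ∑ i, ∑ j, α i * (A.d i * A.c i j) * β j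

/-- `q_i = q^{d_i}`. -/
def qi (A : CartanDatum I) (i : I) : kk := qq ^ (A.d i)

/-- `q_i^{1/2} = (q^{1/2})^{d_i}`. -/
def sqi (A : CartanDatum I) (i : I) : kk := vv ^ (A.d i)

/-! ## The bosonic extension `Â` -/

/-- The free algebra on the generators `f_{i,p}`, `i ∈ I`, `p ∈ ℤ`. -/
abbrev FA (I : Type) [Fintype I] [DecidableEq I] := FreeAlgebra kk (I × ℤ)

/-- The generator `f_{i,p}` of the free algebra. -/
def Xg (p : I × ℤ) : FA I := FreeAlgebra.ι kk p

/-- The defining relations of the bosonic extension: the `q`-Serre relations and the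
`q`-boson relations. -/
inductive AhatRel (A : CartanDatum I) : FA I → FA I → Prop
  | serre (i j : I) (p : ℤ) (h : i ≠ j) :
      AhatRel A
        (∑ k ∈ Finset.range ((1 - A.c i j).toNat + 1),
          (((-1 : kk) ^ k * qbinom (qi A i) (1 - A.c i j).toNat k) •
            (Xg (i, p) ^ k * Xg (j, p) * Xg (i, p) ^ ((1 - A.c i j).toNat - k))))
        0
  | boson (i j : I) (m p : ℤ) (h : m < p) :
      AhatRel A (Xg (i, m) * Xg (j, p))
        ((qq ^ ((-1 : ℤ) ^ (p - m + 1).natAbs * A.form (alphaF i) (alphaF j))) •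
            (Xg (j, p) * Xg (i, m)) +
          (if j = i ∧ p = m + 1 then ((1 : kk) - (qi A i) ^ 2) • (1 : FA I) else 0))

/-- The bosonic extension `Â` associated to the Cartan datum `A`. -/
abbrev Ahat (A : CartanDatum I) := RingQuot (AhatRel A)

/-- The generator `f_{i,m}` of `Â`. -/
def fgen (A : CartanDatum I) (i : I) (m : ℤ) : Ahat A :=
  RingQuot.mkAlgHom kk (AhatRel A) (Xg (i, m))

/-- The divided power `F_{i,m}^{(n)}` of `F_{i,m} = q_i^{1/2} (1-q_i^2)^{-1} f_{i,m}`. -/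
def Fdiv (A : CartanDatum I) (i : I) (m : ℤ) (n : ℕ) : Ahat A :=
  ((sqi A i * (1 - qi A i ^ 2)⁻¹) ^ n / qfact (qi A i) n) • fgen A i m ^ n

/-- `T` is the braid symmetry `T_i` of `Â`: a `k`-algebra automorphism acting on the
generators by the formulas of Theorem (T-braid). -/
def IsBraidT (A : CartanDatum I) (i : I) (T : Ahat A ≃ₐ[kk] Ahat A) : Prop :=
  (∀ m : ℤ, T (fgen A i m) = fgen A i (m + 1)) ∧
  ∀ j : I, j ≠ i → ∀ m : ℤ,
    T (fgen A j m) =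
      ∑ r ∈ Finset.range ((-A.c i j).toNat + 1),
        ((-qi A i) ^ ((-A.c i j).toNat - r)) •
          (Fdiv A i m r * fgen A j m * Fdiv A i m ((-A.c i j).toNat - r))

/-- `T` is the inverse braid symmetry `T_i^⋆` of `Â`. -/
def IsBraidTStar (A : CartanDatum I) (i : I) (T : Ahat A ≃ₐ[kk] Ahat A) : Prop :=
  (∀ m : ℤ, T (fgen A i m) = fgen A i (m - 1)) ∧
  ∀ j : I, j ≠ i → ∀ m : ℤ,
    T (fgen A j m) =
      ∑ r ∈ Finset.range ((-A.c i j).toNat + 1),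
        ((-qi A i) ^ r) •
          (Fdiv A i m r * fgen A j m * Fdiv A i m ((-A.c i j).toNat - r))
/-! ## Gradings, distinguished subalgebras and (anti-)automorphisms -/

/-- The weight of a list of generator indices: `wt (f_{i,m}) = -(-1)^m α_i`. -/
def wtList (L : List (I × ℤ)) : I → ℤ :=
  fun j => (L.map (fun p => if p.1 = j then -(-1 : ℤ) ^ p.2.natAbs else 0)).sum

/-- The weight space of weight `β` of `Â`, spanned by the monomials in the generators of
total weight `β`. -/
def wtSpace (A : CartanDatum I) (β : I → ℤ) : Submodule kk (Ahat A) :=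
  Submodule.span kk
    {x | ∃ L : List (I × ℤ), wtList L = β ∧ x = (L.map (fun p => fgen A p.1 p.2)).prod}

/-- The subalgebra of `Â` generated by the `f_{i,m}` with `m` satisfying `P`. -/
def subOf (A : CartanDatum I) (P : ℤ → Prop) : Subalgebra kk (Ahat A) :=
  Algebra.adjoin kk {x | ∃ i m, P m ∧ x = fgen A i m}

/-- The subalgebra `Â[a,b]`. -/
def subAB (A : CartanDatum I) (a b : ℤ) : Subalgebra kk (Ahat A) :=
  subOf A (fun m => a ≤ m ∧ m ≤ b)

/-- The subalgebra `Â_{≥ m}`. -/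
def subGE (A : CartanDatum I) (m : ℤ) : Subalgebra kk (Ahat A) := subOf A (fun p => m ≤ p)

/-- The subalgebra `Â_{< m}`. -/
def subLT (A : CartanDatum I) (m : ℤ) : Subalgebra kk (Ahat A) := subOf A (fun p => p < m)

/-- The simple reflection `s_i` acting on the root lattice. -/
def siRef (A : CartanDatum I) (i : I) (β : I → ℤ) : I → ℤ :=
  fun j => β j - (∑ l, β l * A.c i l) * (if j = i then 1 else 0)

/-- `S` is the anti-automorphism `⋆` of `Â`, with `(f_{i,p})^⋆ = f_{i,-p}`. -/
structure IsStar (A : CartanDatum I) (S : Ahat A → Ahat A) : Prop where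
  bij : Function.Bijective S
  map_add : ∀ x y, S (x + y) = S x + S y
  map_mul : ∀ x y, S (x * y) = S y * S x
  map_smul : ∀ (a : kk) (x : Ahat A), S (a • x) = a • S x
  map_one : S 1 = 1
  map_gen : ∀ i p, S (fgen A i p) = fgen A i (-p)

/-- `bb` is the bar anti-automorphism of `Â`: it is semilinear with respect to the
involution `barK` of `k` sending `q^{±1/2}` to `q^{∓1/2}` and fixes the generators. -/
structure IsBar (A : CartanDatum I) (barK : kk →+* kk) (bb : Ahat A → Ahat A) : Prop where
  barK_v : barK vv = vv⁻¹
  bij : Function.Bijective bb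
  map_add : ∀ x y, bb (x + y) = bb x + bb y
  map_mul : ∀ x y, bb (x * y) = bb y * bb x
  map_smul : ∀ (a : kk) (x : Ahat A), bb (a • x) = barK a • bb x
  map_gen : ∀ i p, bb (fgen A i p) = fgen A i p

/-- `cc` is the twisted bar involution `c` of `Â`: `c(x) = q^{N(wt x)} bar(x)` on
homogeneous elements, where `N(β) = (β,β)/2`, so `q^{N(β)} = (q^{1/2})^{(β,β)}`. -/
structure IsC (A : CartanDatum I) (bb cc : Ahat A → Ahat A) : Prop where
  map_add : ∀ x y, cc (x + y) = cc x + cc y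
  homog : ∀ (β : I → ℤ), ∀ x ∈ wtSpace A β, cc x = (vv ^ A.form β β) • bb x

/-- `D` is the shift automorphism `D̄` of `Â`, sending `f_{i,p}` to `f_{i,p+1}`. -/
def IsDbar (A : CartanDatum I) (D : Ahat A ≃ₐ[kk] Ahat A) : Prop :=
  ∀ i p, D (fgen A i p) = fgen A i (p + 1)

/-! ## The projection `M` and the bilinear forms -/

/-- The ordered product `g(b) g(b-1) ⋯ g(a)` (indices decreasing from left to right). -/
def descProd (A : CartanDatum I) (g : ℤ → Ahat A) (a b : ℤ) : Ahat A :=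
  ((List.range (b + 1 - a).toNat).map (fun t => g (b - (t : ℤ)))).prod

/-- `M` is the projection `Â → k` onto the trivial component of the triangular
decomposition `Â = ⊕ ∏→ Â[k]_{β_k}`: it sends `1` to `1` and kills every ordered
product of homogeneous components one of whose weights is nonzero. -/
def IsProjM (A : CartanDatum I) (M : Ahat A →ₗ[kk] kk) : Prop :=
  M 1 = 1 ∧
  ∀ a b : ℤ, ∀ β : ℤ → (I → ℤ), (∃ k, a ≤ k ∧ k ≤ b ∧ β k ≠ 0) →
    ∀ g : ℤ → Ahat A,
      (∀ k, a ≤ k → k ≤ b → g k ∈ subAB A k k ∧ g k ∈ wtSpace A (β k)) →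
      M (descProd A g a b) = 0

/-! ## Braid words -/

/-- The alternating composition `S ∘ T ∘ S ∘ ⋯` with `n` factors (as automorphisms,
`AlgEquiv.trans e f = f ∘ e`). -/
def altWord {A₁ : Type} [Semiring A₁] [Algebra kk A₁] :
    (A₁ ≃ₐ[kk] A₁) → (A₁ ≃ₐ[kk] A₁) → ℕ → (A₁ ≃ₐ[kk] A₁)
  | _, _, 0 => AlgEquiv.refl
  | S, T, n + 1 => (altWord T S n).trans S

/-- The alternating composition `f ∘ g ∘ f ∘ ⋯` with `n` factors, for plain functions. -/
def altFun {X : Type} : (X → X) → (X → X) → ℕ → (X → X)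
  | _, _, 0 => id
  | f, g, n + 1 => f ∘ (altFun g f n)

/-- The order `m_{i,j}` of the braid relation between `r_i` and `r_j`
(finite exactly when `c_{ij} c_{ji} ≤ 3`). -/
def mij (A : CartanDatum I) (i j : I) : ℕ :=
  if A.c i j * A.c j i ≤ 2 then (A.c i j * A.c j i + 2).toNat else 6

/-- The composition `T_{i_1} ∘ T_{i_2} ∘ ⋯ ∘ T_{i_n}` attached to a sequence `ii`
(0-indexed: `ii t` is `i_{t+1}`). -/
def Tpref (A : CartanDatum I) (T : I → (Ahat A ≃ₐ[kk] Ahat A)) (ii : ℕ → I) :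
    ℕ → (Ahat A ≃ₐ[kk] Ahat A)
  | 0 => AlgEquiv.refl
  | n + 1 => (T (ii n)).trans (Tpref A T ii n)

/-- The cuspidal element `P^i_{k+1} = T_{i_1} ⋯ T_{i_k} (q_{i_{k+1}}^{1/2} f_{i_{k+1},0})`
(0-indexed in `k`). -/
def cusp (A : CartanDatum I) (T : I → (Ahat A ≃ₐ[kk] Ahat A)) (ii : ℕ → I) (k : ℕ) :
    Ahat A :=
  Tpref A T ii k ((vv ^ A.d (ii k)) • fgen A (ii k) 0)

/-- The divided cuspidal element `P_k^{i,(m)} = q_{i_k}^{m(m-1)/2} (P^i_k)^m`. -/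
def cuspDiv (A : CartanDatum I) (T : I → (Ahat A ≃ₐ[kk] Ahat A)) (ii : ℕ → I)
    (k : ℕ) (m : ℕ) : Ahat A :=
  (qq ^ (A.d (ii k) * (m.choose 2 : ℤ))) • (cusp A T ii k) ^ m

/-- The PBW element `P^i(u) = P_r^{(u_r)} ⋯ P_1^{(u_1)}` (factors with decreasing index
from left to right), for `u : ℕ → ℕ`. -/
def pbw (A : CartanDatum I) (T : I → (Ahat A ≃ₐ[kk] Ahat A)) (ii : ℕ → I)
    (r : ℕ) (u : ℕ → ℕ) : Ahat A :=
  ((List.range r).map (fun t => cuspDiv A T ii (r - 1 - t) (u (r - 1 - t)))).prod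

/-- The PBW element `P^i(u)` for `u : Fin r → ℕ`. -/
def pbwF (A : CartanDatum I) (T : I → (Ahat A ≃ₐ[kk] Ahat A)) (ii : ℕ → I)
    (r : ℕ) (u : Fin r → ℕ) : Ahat A :=
  ((List.finRange r).reverse.map (fun k : Fin r => cuspDiv A T ii k.1 (u k))).prod

/-- The prefix `s_{i_1} s_{i_2} ⋯ s_{i_n}` of simple reflections applied to a weight. -/
def sPref (A : CartanDatum I) (ii : ℕ → I) : ℕ → (I → ℤ) → (I → ℤ)
  | 0 => id
  | n + 1 => fun β => sPref A ii n (siRef A (ii n) β)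

/-- The weight of the cuspidal element `P^i_{k+1}` (0-indexed). -/
def wtCusp (A : CartanDatum I) (ii : ℕ → I) (k : ℕ) : I → ℤ :=
  sPref A ii k (fun j => -(alphaF (ii k) j))

lemma intDegree_vv_zpow (N : ℤ) : (vv ^ N : kk).intDegree = N := by
  have hpow (n : ℕ) : (vv ^ n : kk).intDegree = n := by
    rw [vv, ← RatFunc.algebraMap_X, ← map_pow, RatFunc.intDegree_polynomial,
      Polynomial.natDegree_X_pow]
  cases N with
  | ofNat n => rw [Int.ofNat_eq_natCast, zpow_natCast, hpow]
  | negSucc n => rw [zpow_negSucc, RatFunc.intDegree_inv, hpow, Int.negSucc_eq]; push_cast; ring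

lemma vv_zpow_eq_one_iff {N : ℤ} : (vv : kk) ^ N = 1 ↔ N = 0 :=
  ⟨fun h => by rw [← intDegree_vv_zpow N, h, RatFunc.intDegree_one], fun h => by rw [h, zpow_zero]⟩

lemma qint_succ {t : kk} (ht : t ≠ 0) (k : ℕ) : qint t (k + 1) = t ^ k + t⁻¹ * qint t k := by
  unfold qint
  rw [Finset.sum_range_succ', Finset.mul_sum, add_comm]
  congr 1
  · rw [← zpow_natCast]
    congr 1
    push_cast
    ring
  · refine Finset.sum_congr rfl fun r _ => ?_
    rw [← zpow_neg_one, ← zpow_add₀ ht]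
    congr 1
    push_cast
    ring

lemma pow_two_mul_sub_one {t : kk} (ht : t ≠ 0) (k : ℕ) :
    t ^ (2 * k) - 1 = t ^ k * ((t - t⁻¹) * qint t k) := by
  induction k with
  | zero => simp [qint]
  | succ k ih =>
    rw [qint_succ ht]
    linear_combination mul_inv_cancel₀ ht + t * t⁻¹ * ih

lemma qint_ne_zero {t : kk} (ht : t ≠ 0) (hroot : ∀ a : ℕ, a ≠ 0 → t ^ a ≠ 1) {k : ℕ}
    (hk : k ≠ 0) : qint t k ≠ 0 := by
  intro h
  apply hroot (2 * k) (by omega)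
  rw [← sub_eq_zero, pow_two_mul_sub_one ht, h, mul_zero, mul_zero]

lemma qfact_succ (t : kk) (k : ℕ) : qfact t (k + 1) = qfact t k * qint t (k + 1) :=
  Finset.prod_range_succ _ _

lemma qfact_ne_zero {t : kk} (ht : t ≠ 0) (hroot : ∀ a : ℕ, a ≠ 0 → t ^ a ≠ 1) (k : ℕ) :
    qfact t k ≠ 0 :=
  Finset.prod_ne_zero_iff.mpr fun s _ => qint_ne_zero ht hroot s.succ_ne_zero

lemma qbinom_mul_qint_succ_top {t : kk} (ht : t ≠ 0) (hroot : ∀ a : ℕ, a ≠ 0 → t ^ a ≠ 1)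
    (r s : ℕ) :
    qbinom t (r + s) r * qint t (r + s + 1) = qbinom t (r + s + 1) r * qint t (s + 1) := by
  unfold qbinom
  rw [show r + s - r = s by omega, show r + s + 1 - r = s + 1 by omega, qfact_succ t (r + s),
    qfact_succ t s]
  have := qfact_ne_zero ht hroot r
  have := qfact_ne_zero ht hroot s
  have := qfact_ne_zero ht hroot (r + s)
  have := qint_ne_zero ht hroot (k := r + s + 1) (by omega)
  have := qint_ne_zero ht hroot (k := s + 1) (by omega)
  field_simp

lemma qbinom_succ_mul_qint_succ {t : kk} (ht : t ≠ 0) (hroot : ∀ a : ℕ, a ≠ 0 → t ^ a ≠ 1)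
    (r s : ℕ) :
    qbinom t (r + s + 1) (r + 1) * qint t (r + 1) =
      qbinom t (r + s + 1) r * qint t (s + 1) := by
  unfold qbinom
  rw [show r + s + 1 - (r + 1) = s by omega, show r + s + 1 - r = s + 1 by omega,
    qfact_succ t r, qfact_succ t s]
  have := qfact_ne_zero ht hroot r
  have := qfact_ne_zero ht hroot s
  have := qfact_ne_zero ht hroot (r + s + 1)
  have := qint_ne_zero ht hroot (k := r + 1) (by omega)
  have := qint_ne_zero ht hroot (k := s + 1) (by omega)
  field_simp

lemma qbinom_recursion {t : kk} (ht : t ≠ 0) (hroot : ∀ a : ℕ, a ≠ 0 → t ^ a ≠ 1)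
    (r s c : ℕ) :
    -(t ^ (s + c + 2) * qbinom t (r + s + 1) (r + 1) * (t ^ (2 * (r + 1)) - 1))
      + t ^ (r + 3 * c + 4) * qbinom t (r + s + 1) r * (t ^ (2 * (s + 1)) - 1)
    = t ^ (c + 2) * qbinom t (r + s) r * (t ^ (2 * c + 2) - 1) *
        (t ^ (2 * (r + s + 1)) - 1) := by
  rw [pow_two_mul_sub_one ht, pow_two_mul_sub_one ht, pow_two_mul_sub_one ht]
  linear_combination (-(t ^ (r + s + c + 3)) * (t - t⁻¹)) * qbinom_succ_mul_qint_succ ht hroot r s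
    + (-(t ^ (r + s + c + 3)) * (t - t⁻¹) * (t ^ (2 * c + 2) - 1)) *
      qbinom_mul_qint_succ_top ht hroot r s

def commProd (t : kk) (n T : ℕ) : kk :=
  ∏ k ∈ Finset.range T, ((1 - t ^ (2 * k + 2)) * (1 - t ^ (2 * (n - k))))

-- The coefficient of `sandwich r (n - T - r)` in `iterComm T` when `F_{i,m} = κ f_{i,m}`,
-- `t = q_i` and `n = -c_{ij}` (see `iterComm_eq_sum`).
def commCoeff (t κ : kk) (n T r : ℕ) : kk :=
  (-1) ^ (n + T + r) * t ^ ((n - r) * (T + 1)) * κ ^ n * (qfact t n)⁻¹ * qbinom t (n - T) r *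
    commProd t n T

lemma commCoeff_zero {t : kk} (ht : t ≠ 0) (hroot : ∀ a : ℕ, a ≠ 0 → t ^ a ≠ 1)
    (κ : kk) (r s : ℕ) :
    commCoeff t κ (r + s) 0 r = (-t) ^ s * (κ ^ r / qfact t r) * (κ ^ s / qfact t s) := by
  unfold commCoeff qbinom commProd
  rw [Finset.prod_range_zero, Nat.sub_zero, show r + s - r = s by omega]
  have := qfact_ne_zero ht hroot r
  have := qfact_ne_zero ht hroot s
  have := qfact_ne_zero ht hroot (r + s)
  rw [neg_pow]
  field_simp
  ring_nf
  rw [mul_comm r 2, pow_mul, neg_one_sq, one_pow]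
  ring

lemma commCoeff_succ {t : kk} (ht : t ≠ 0) (hroot : ∀ a : ℕ, a ≠ 0 → t ^ a ≠ 1)
    (κ : kk) (c r s : ℕ) :
    commCoeff t κ (c + r + s + 1) (c + 1) r
      = commCoeff t κ (c + r + s + 1) c (r + 1) * (t ^ (2 * s + 2 * c + 2) * (1 - t ^ (2 * r + 2)))
      + commCoeff t κ (c + r + s + 1) c r * (t ^ (c + r + s + 1 + 2 * c + 2) *
          (1 - t ^ (2 * s + 2))) := by
  unfold commCoeff
  rw [commProd, Finset.prod_range_succ, ← commProd,
    show 2 * (c + r + s + 1 - c) = 2 * (r + s + 1) by omega,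
    show c + r + s + 1 - (c + 1) = r + s by omega, show c + r + s + 1 - c = r + s + 1 by omega,
    show c + r + s + 1 - (r + 1) = c + s by omega, show c + r + s + 1 - r = c + s + 1 by omega]
  linear_combination (-1 : kk) ^ (c + r + s + 1 + c + r) * κ ^ (c + r + s + 1) *
    (qfact t (c + r + s + 1))⁻¹ * commProd t (c + r + s + 1) c * t ^ ((c + s) * (c + 2)) *
    qbinom_recursion ht hroot r s c

lemma commCoeff_self_zero_ne_zero {t κ : kk} (ht : t ≠ 0)
    (hroot : ∀ a : ℕ, a ≠ 0 → t ^ a ≠ 1) (hκ : κ ≠ 0) (n : ℕ) :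
    commCoeff t κ n n 0 ≠ 0 := by
  have hprod : commProd t n n ≠ 0 :=
    Finset.prod_ne_zero_iff.mpr fun k hk => mul_ne_zero
      (sub_ne_zero.mpr (hroot (2 * k + 2) (by omega)).symm)
      (sub_ne_zero.mpr (hroot (2 * (n - k)) (by simp at hk; omega)).symm)
  have hbinom : qbinom t (n - n) 0 = 1 := by simp [qbinom, qfact]
  unfold commCoeff
  rw [hbinom, mul_one]
  exact mul_ne_zero (mul_ne_zero (mul_ne_zero (mul_ne_zero (pow_ne_zero _ (by norm_num))
    (pow_ne_zero _ ht)) (pow_ne_zero _ hκ)) (inv_ne_zero (qfact_ne_zero ht hroot n))) hprod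

section Relations

variable (A : CartanDatum I)

lemma form_alphaF (i j : I) : A.form (alphaF i) (alphaF j) = A.d i * A.c i j := by
  simp [CartanDatum.form, alphaF]

lemma qi_eq_vv_zpow (i : I) : qi A i = vv ^ (2 * A.d i) := by
  rw [qi, qq, ← zpow_natCast, ← zpow_mul]
  norm_num

lemma qi_ne_zero (i : I) : qi A i ≠ 0 := by
  rw [qi_eq_vv_zpow]
  exact zpow_ne_zero _ RatFunc.X_ne_zero

lemma qi_pow_ne_one (i : I) {a : ℕ} (ha : a ≠ 0) : qi A i ^ a ≠ 1 := by
  rw [qi_eq_vv_zpow, ← zpow_natCast, ← zpow_mul, Ne, vv_zpow_eq_one_iff]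
  have := A.d_pos i
  positivity

lemma qi_zpow_c_eq_inv {i j : I} (hji : j ≠ i) :
    qi A i ^ A.c i j = (qi A i ^ (-A.c i j).toNat)⁻¹ := by
  rw [← zpow_natCast, Int.toNat_of_nonneg (by linarith [A.c_offdiag i j hji.symm]), zpow_neg,
    inv_inv]

lemma fgen_mul_fgen_of_lt (i j : I) {m p : ℤ} (h : m < p) :
    fgen A i m * fgen A j p =
      (qq ^ ((-1 : ℤ) ^ (p - m + 1).natAbs * A.form (alphaF i) (alphaF j))) •
          (fgen A j p * fgen A i m) +
        (if j = i ∧ p = m + 1 then ((1 : kk) - (qi A i) ^ 2) • (1 : Ahat A) else 0) := by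
  have hrel := RingQuot.mkAlgHom_rel kk (AhatRel.boson (A := A) i j m p h)
  unfold fgen
  rw [map_mul] at hrel
  rw [hrel, map_add, map_smul, map_mul]
  split_ifs
  · rw [map_smul, map_one]
  · rw [map_zero]

lemma exists_fgen_mul_fgen_eq (i j : I) {m p : ℤ} (h : m < p) :
    ∃ a b : kk, fgen A j m * fgen A i p = a • (fgen A i p * fgen A j m) + b • 1 := by
  rw [fgen_mul_fgen_of_lt A j i h, ← zero_smul kk (1 : Ahat A), ← ite_smul]
  exact ⟨_, _, rfl⟩

lemma fgen_mul_fgen_succ_self (i : I) (m : ℤ) :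
    fgen A i m * fgen A i (m + 1) =
      qi A i ^ 2 • (fgen A i (m + 1) * fgen A i m) + (1 - qi A i ^ 2) • 1 := by
  rw [fgen_mul_fgen_of_lt A i i (lt_add_one m), if_pos ⟨rfl, rfl⟩, form_alphaF, A.c_diag,
    show m + 1 - m + 1 = 2 by ring, qi, ← zpow_natCast, ← zpow_mul]
  norm_num [mul_comm]

lemma fgen_mul_fgen_succ_of_ne {i j : I} (hji : j ≠ i) (m : ℤ) :
    fgen A j m * fgen A i (m + 1) = qi A i ^ A.c i j • (fgen A i (m + 1) * fgen A j m) := by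
  rw [fgen_mul_fgen_of_lt A j i (lt_add_one m), if_neg fun h => hji h.1.symm, add_zero,
    form_alphaF, ← A.symm, show m + 1 - m + 1 = 2 by ring, qi, ← zpow_mul]
  norm_num

lemma fgen_pow_mul_fgen_succ (i : I) (m : ℤ) (s : ℕ) :
    fgen A i m ^ s * fgen A i (m + 1) =
      qi A i ^ (2 * s) • (fgen A i (m + 1) * fgen A i m ^ s) +
        (1 - qi A i ^ (2 * s)) • fgen A i m ^ (s - 1) := by
  induction s with
  | zero => simp
  | succ s ih =>
    rw [pow_succ', mul_assoc, ih, mul_add, mul_smul_comm, mul_smul_comm, ← mul_assoc,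
      fgen_mul_fgen_succ_self, add_mul, smul_mul_assoc, smul_mul_assoc, one_mul, mul_assoc,
      ← pow_succ']
    rcases s with _ | s
    · simp
    · rw [Nat.add_sub_cancel, ← pow_succ', show s + 1 + 1 - 1 = s + 1 by omega, smul_add,
        smul_smul, smul_smul, add_assoc, ← add_smul]
      congr 2 <;> ring

end Relations

section IteratedCommutator

variable {A : CartanDatum I} {i j : I} (m : ℤ)

variable (A i j) in
def sandwich (r s : ℕ) : Ahat A := fgen A i m ^ r * fgen A j m * fgen A i m ^ s

lemma sandwich_mul_fgen_succ (hji : j ≠ i) (r s : ℕ) :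
    sandwich A i j m r s * fgen A i (m + 1) =
      (qi A i ^ (2 * (r + s)) * qi A i ^ A.c i j) • (fgen A i (m + 1) * sandwich A i j m r s) +
        (qi A i ^ A.c i j * qi A i ^ (2 * s) * (1 - qi A i ^ (2 * r))) •
          sandwich A i j m (r - 1) s +
        (1 - qi A i ^ (2 * s)) • sandwich A i j m r (s - 1) := by
  unfold sandwich
  rw [mul_assoc, fgen_pow_mul_fgen_succ, mul_add, mul_smul_comm, mul_smul_comm, ← mul_assoc,
    mul_assoc (fgen A i m ^ r), fgen_mul_fgen_succ_of_ne A hji, mul_smul_comm, ← mul_assoc,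
    fgen_pow_mul_fgen_succ]
  simp only [add_mul, smul_mul_assoc, smul_add, smul_smul, mul_assoc]
  congr 3 <;> ring

lemma sum_sandwich_mul_fgen_succ (hji : j ≠ i) (N : ℕ) (γ : ℕ → kk) :
    (∑ r ∈ range (N + 2), γ r • sandwich A i j m r (N + 1 - r)) * fgen A i (m + 1) =
      (qi A i ^ (2 * (N + 1)) * qi A i ^ A.c i j) •
          (fgen A i (m + 1) * ∑ r ∈ range (N + 2), γ r • sandwich A i j m r (N + 1 - r)) +
        ∑ r ∈ range (N + 1),
          (γ (r + 1) * (qi A i ^ A.c i j * qi A i ^ (2 * (N - r)) * (1 - qi A i ^ (2 * (r + 1)))) +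
            γ r * (1 - qi A i ^ (2 * (N + 1 - r)))) • sandwich A i j m r (N - r) := by
  have hterm : ∀ r ∈ range (N + 2),
      (γ r • sandwich A i j m r (N + 1 - r)) * fgen A i (m + 1) =
        (qi A i ^ (2 * (N + 1)) * qi A i ^ A.c i j) •
            (fgen A i (m + 1) * γ r • sandwich A i j m r (N + 1 - r)) +
          ((γ r * (qi A i ^ A.c i j * qi A i ^ (2 * (N + 1 - r)) * (1 - qi A i ^ (2 * r)))) •
              sandwich A i j m (r - 1) (N + 1 - r) +
            (γ r * (1 - qi A i ^ (2 * (N + 1 - r)))) • sandwich A i j m r (N + 1 - r - 1)) := by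
    intro r hr
    have hsum : 2 * (N + 1) = 2 * (r + (N + 1 - r)) := by simp at hr; omega
    rw [smul_mul_assoc, sandwich_mul_fgen_succ m hji, ← hsum, mul_smul_comm, smul_add, smul_add,
      smul_smul, smul_smul, smul_smul, smul_smul, mul_comm (γ r), add_assoc]
  have hlower : ∑ r ∈ range (N + 2),
      (γ r * (qi A i ^ A.c i j * qi A i ^ (2 * (N + 1 - r)) * (1 - qi A i ^ (2 * r)))) •
        sandwich A i j m (r - 1) (N + 1 - r) =
      ∑ r ∈ range (N + 1),
        (γ (r + 1) * (qi A i ^ A.c i j * qi A i ^ (2 * (N - r)) * (1 - qi A i ^ (2 * (r + 1))))) •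
          sandwich A i j m r (N - r) := by
    rw [Finset.sum_range_succ', mul_zero, pow_zero, sub_self, mul_zero, mul_zero, zero_smul,
      add_zero]
    refine Finset.sum_congr rfl fun r _ => ?_
    rw [Nat.add_sub_cancel, show N + 1 - (r + 1) = N - r by omega]
  have hupper : ∑ r ∈ range (N + 2),
      (γ r * (1 - qi A i ^ (2 * (N + 1 - r)))) • sandwich A i j m r (N + 1 - r - 1) =
      ∑ r ∈ range (N + 1),
        (γ r * (1 - qi A i ^ (2 * (N + 1 - r)))) • sandwich A i j m r (N - r) := by
    rw [Finset.sum_range_succ, Nat.sub_self, mul_zero, pow_zero, sub_self, mul_zero, zero_smul,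
      add_zero]
    refine Finset.sum_congr rfl fun r hr => ?_
    rw [show N + 1 - r - 1 = N - r by simp at hr; omega]
  rw [Finset.sum_mul, Finset.mul_sum, Finset.smul_sum, Finset.sum_congr rfl hterm,
    Finset.sum_add_distrib, Finset.sum_add_distrib, hlower, hupper, ← Finset.sum_add_distrib]
  simp only [add_smul]

-- Step `t` is the twisted commutator with `f_{i,m+1}` that cancels the leading term of
-- `sandwich_mul_fgen_succ` in `f_{i,m}`-degree `n - t`; the factor `q_i^{n+2t+2}` only normalises
-- the coefficients to `commCoeff`.
variable (A i j) in
def iterComm (x : Ahat A) : ℕ → Ahat A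
  | 0 => x
  | t + 1 => qi A i ^ ((-A.c i j).toNat + 2 * t + 2) •
      (iterComm x t * fgen A i (m + 1) -
        (qi A i ^ (2 * ((-A.c i j).toNat - t)) * qi A i ^ A.c i j) •
          (fgen A i (m + 1) * iterComm x t))

lemma iterComm_eq_sum (hji : j ≠ i) (κ : kk) {x : Ahat A}
    (hx : x = ∑ r ∈ range ((-A.c i j).toNat + 1),
      commCoeff (qi A i) κ (-A.c i j).toNat 0 r • sandwich A i j m r ((-A.c i j).toNat - r))
    {t : ℕ} (ht : t ≤ (-A.c i j).toNat) :
    iterComm A i j m x t = ∑ r ∈ range ((-A.c i j).toNat - t + 1),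
      commCoeff (qi A i) κ (-A.c i j).toNat t r •
        sandwich A i j m r ((-A.c i j).toNat - t - r) := by
  induction t with
  | zero => simpa [iterComm] using hx
  | succ t ih =>
    obtain ⟨N, hN⟩ : ∃ N, (-A.c i j).toNat - t = N + 1 := ⟨(-A.c i j).toNat - t - 1, by omega⟩
    rw [iterComm, ih (by omega), hN, show (-A.c i j).toNat - (t + 1) = N by omega,
      show N + 1 + 1 = N + 2 from rfl, sum_sandwich_mul_fgen_succ m hji, add_sub_cancel_left,
      Finset.smul_sum]
    refine Finset.sum_congr rfl fun r hr => ?_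
    obtain ⟨s, rfl⟩ : ∃ s, N = r + s := ⟨N - r, by simp at hr; omega⟩
    have hn : (-A.c i j).toNat = t + r + s + 1 := by omega
    rw [smul_smul, qi_zpow_c_eq_inv A hji, hn, commCoeff_succ (qi_ne_zero A i)
      (fun a ha => qi_pow_ne_one A i ha), show r + s - r = s by omega,
      show r + s + 1 - r = s + 1 by omega]
    have := qi_ne_zero A i
    congr 1
    field_simp
    ring

lemma iterComm_eq_smul (hji : j ≠ i) (κ : kk) {x : Ahat A}
    (hx : x = ∑ r ∈ range ((-A.c i j).toNat + 1),
      commCoeff (qi A i) κ (-A.c i j).toNat 0 r • sandwich A i j m r ((-A.c i j).toNat - r)) :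
    iterComm A i j m x (-A.c i j).toNat =
      commCoeff (qi A i) κ (-A.c i j).toNat (-A.c i j).toNat 0 • fgen A j m := by
  rw [iterComm_eq_sum m hji κ hx le_rfl, Nat.sub_self, zero_add, Finset.sum_range_one, sandwich,
    pow_zero, one_mul, mul_one]

lemma IsBraidT.apply_fgen_eq_sum {T : Ahat A ≃ₐ[kk] Ahat A} (hT : IsBraidT A i T)
    (hji : j ≠ i) :
    T (fgen A j m) = ∑ r ∈ range ((-A.c i j).toNat + 1),
      commCoeff (qi A i) (sqi A i * (1 - qi A i ^ 2)⁻¹) (-A.c i j).toNat 0 r •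
        sandwich A i j m r ((-A.c i j).toNat - r) := by
  rw [hT.2 j hji m]
  refine Finset.sum_congr rfl fun r hr => ?_
  obtain ⟨s, hs⟩ : ∃ s, (-A.c i j).toNat = r + s := ⟨(-A.c i j).toNat - r, by simp at hr; omega⟩
  rw [hs, Nat.add_sub_cancel_left, commCoeff_zero (qi_ne_zero A i)
    (fun a ha => qi_pow_ne_one A i ha), Fdiv, Fdiv, sandwich]
  simp only [smul_mul_assoc, mul_smul_comm, smul_smul]
  congr 1
  ring

lemma fgen_mem_of_isBraidT {T : Ahat A ≃ₐ[kk] Ahat A} (hT : IsBraidT A i T) (hji : j ≠ i)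
    {S : Subalgebra kk (Ahat A)} (hH : fgen A i (m + 1) ∈ S) (hTG : T (fgen A j m) ∈ S) :
    fgen A j m ∈ S := by
  have hiter : ∀ t, iterComm A i j m (T (fgen A j m)) t ∈ S := by
    intro t
    induction t with
    | zero => exact hTG
    | succ t ih => exact S.smul_mem (sub_mem (mul_mem ih hH) (S.smul_mem (mul_mem hH ih) _)) _
  have hκ : sqi A i * (1 - qi A i ^ 2)⁻¹ ≠ 0 :=
    mul_ne_zero (zpow_ne_zero _ RatFunc.X_ne_zero)
      (inv_ne_zero (sub_ne_zero.mpr (qi_pow_ne_one A i two_ne_zero).symm))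
  have hlast := hiter (-A.c i j).toNat
  rw [iterComm_eq_smul m hji _ (hT.apply_fgen_eq_sum m hji)] at hlast
  have hinv := S.smul_mem hlast (commCoeff (qi A i) (sqi A i * (1 - qi A i ^ 2)⁻¹)
      (-A.c i j).toNat (-A.c i j).toNat 0)⁻¹
  rwa [inv_smul_smul₀ (commCoeff_self_zero_ne_zero (qi_ne_zero A i)
    (fun a ha => qi_pow_ne_one A i ha) hκ _)] at hinv

end IteratedCommutator

section MulLeftStabilizer

variable {R B : Type*} [CommSemiring R] [Semiring B] [Algebra R B]

def Submodule.mulLeftStabilizer (N : Submodule R B) : Subalgebra R B where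
  carrier := {a | ∀ n ∈ N, a * n ∈ N}
  mul_mem' ha hb n hn := by rw [mul_assoc]; exact ha _ (hb n hn)
  add_mem' ha hb n hn := by rw [add_mul]; exact N.add_mem (ha n hn) (hb n hn)
  algebraMap_mem' r n hn := by rw [← Algebra.smul_def]; exact N.smul_mem r hn

lemma Submodule.mem_mulLeftStabilizer_span_iff {S : Set B} {a : B} :
    a ∈ (span R S).mulLeftStabilizer ↔ ∀ s ∈ S, a * s ∈ span R S := by
  refine ⟨fun ha s hs => ha s (subset_span hs), fun ha n hn => ?_⟩
  induction hn using Submodule.span_induction with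
  | mem s hs => exact ha s hs
  | zero => rw [mul_zero]; exact zero_mem _
  | add x y _ _ hx hy => rw [mul_add]; exact add_mem hx hy
  | smul c x _ hx => rw [mul_smul_comm]; exact Submodule.smul_mem _ c hx

end MulLeftStabilizer

section BraidImage

variable (A : CartanDatum I) (i : I)

def powMulSubLT : Submodule kk (Ahat A) :=
  Submodule.span kk {y | ∃ k : ℕ, ∃ x ∈ (subLT A 0 : Set (Ahat A)), y = fgen A i 0 ^ k * x}

lemma pow_mul_mem_powMulSubLT (k : ℕ) {x : Ahat A} (hx : x ∈ subLT A 0) :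
    fgen A i 0 ^ k * x ∈ powMulSubLT A i :=
  Submodule.subset_span ⟨k, x, hx, rfl⟩

lemma mem_powMulSubLT_of_mem_subLT {x : Ahat A} (hx : x ∈ subLT A 0) : x ∈ powMulSubLT A i := by
  simpa using pow_mul_mem_powMulSubLT A i 0 hx

lemma fgen_mem_subLT (j : I) {m : ℤ} (hm : m < 0) : fgen A j m ∈ subLT A 0 :=
  Algebra.subset_adjoin ⟨j, m, hm, rfl⟩

lemma fgen_mem_mulLeftStabilizer : fgen A i 0 ∈ (powMulSubLT A i).mulLeftStabilizer := by
  refine Submodule.mem_mulLeftStabilizer_span_iff.mpr ?_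
  rintro _ ⟨k, x, hx, rfl⟩
  rw [← mul_assoc, ← pow_succ']
  exact pow_mul_mem_powMulSubLT A i _ hx

lemma subLT_le_mulLeftStabilizer : subLT A 0 ≤ (powMulSubLT A i).mulLeftStabilizer := by
  refine Algebra.adjoin_le ?_
  rintro _ ⟨j, m, hm, rfl⟩
  refine Submodule.mem_mulLeftStabilizer_span_iff.mpr ?_
  rintro _ ⟨k, x, hx, rfl⟩
  induction k generalizing x with
  | zero =>
    rw [pow_zero, one_mul]
    exact mem_powMulSubLT_of_mem_subLT A i (mul_mem (fgen_mem_subLT A j hm) hx)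
  | succ k ih =>
    obtain ⟨a, b, hab⟩ := exists_fgen_mul_fgen_eq A i j hm
    rw [pow_succ', mul_assoc, ← mul_assoc, hab, add_mul, smul_mul_assoc, mul_assoc, smul_mul_assoc,
      one_mul]
    exact add_mem (Submodule.smul_mem _ a (fgen_mem_mulLeftStabilizer A i _ (ih x hx)))
      (Submodule.smul_mem _ b (pow_mul_mem_powMulSubLT A i k hx))

variable {A i}

lemma IsBraidT.apply_fgen_mem_subOf {T : Ahat A ≃ₐ[kk] Ahat A} (hT : IsBraidT A i T) {j : I}
    (hji : j ≠ i) {P : ℤ → Prop} {m : ℤ} (hm : P m) : T (fgen A j m) ∈ subOf A P := by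
  have hgen (l : I) : fgen A l m ∈ subOf A P := Algebra.subset_adjoin ⟨l, m, hm, rfl⟩
  rw [hT.2 j hji m]
  refine Subalgebra.sum_mem _ fun r _ => Subalgebra.smul_mem _ ?_ _
  exact mul_mem (mul_mem (Subalgebra.smul_mem _ (pow_mem (hgen i) _) _) (hgen j))
    (Subalgebra.smul_mem _ (pow_mem (hgen i) _) _)

lemma IsBraidT.map_subLT_le {T : Ahat A ≃ₐ[kk] Ahat A} (hT : IsBraidT A i T) :
    (subLT A 0).map T.toAlgHom ≤ (powMulSubLT A i).mulLeftStabilizer := by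
  rw [Subalgebra.map_le]
  refine Algebra.adjoin_le ?_
  rintro _ ⟨j, m, hm, rfl⟩
  by_cases hji : j = i
  · subst hji
    change T (fgen A j m) ∈ (powMulSubLT A j).mulLeftStabilizer
    rw [hT.1 m]
    rcases (show m + 1 ≤ 0 by omega).lt_or_eq with hlt | heq
    · exact subLT_le_mulLeftStabilizer A j (fgen_mem_subLT A j hlt)
    · rw [heq]
      exact fgen_mem_mulLeftStabilizer A j
  · exact subLT_le_mulLeftStabilizer A i (hT.apply_fgen_mem_subOf hji hm)

lemma IsBraidT.subLT_le_map {T : Ahat A ≃ₐ[kk] Ahat A} (hT : IsBraidT A i T) :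
    subLT A 0 ≤ (subLT A 0).map T.toAlgHom := by
  have hshift {m : ℤ} (hm : m < 0) : fgen A i (m + 1) ∈ (subLT A 0).map T.toAlgHom :=
    ⟨fgen A i m, fgen_mem_subLT A i hm, hT.1 m⟩
  refine Algebra.adjoin_le ?_
  rintro _ ⟨j, m, hm, rfl⟩
  by_cases hji : j = i
  · subst hji
    simpa using hshift (show m - 1 < 0 by omega)
  · exact fgen_mem_of_isBraidT m hT hji (hshift hm) ⟨fgen A j m, fgen_mem_subLT A j hm, rfl⟩

lemma IsBraidT.powMulSubLT_le_map {T : Ahat A ≃ₐ[kk] Ahat A} (hT : IsBraidT A i T) :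
    powMulSubLT A i ≤ Subalgebra.toSubmodule ((subLT A 0).map T.toAlgHom) := by
  rw [powMulSubLT, Submodule.span_le]
  rintro _ ⟨k, x, hx, rfl⟩
  have hf : fgen A i 0 ∈ (subLT A 0).map T.toAlgHom :=
    ⟨fgen A i (-1), fgen_mem_subLT A i (by norm_num), by simpa using hT.1 (-1)⟩
  exact (Subalgebra.mem_toSubmodule _).mpr (mul_mem (pow_mem hf k) (hT.subLT_le_map hx))

end BraidImage

/-- For every `i ∈ I`,
`T_i(Â_{<0}) = Σ_{k ≥ 0} f_{i,0}^k · Â_{<0}`. -/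
theorem statement11 {I : Type} [Fintype I] [DecidableEq I] (A : CartanDatum I) (i : I)
    (T : Ahat A ≃ₐ[kk] Ahat A) (hT : IsBraidT A i T) :
    ⇑T '' (subLT A 0 : Set (Ahat A)) =
      (Submodule.span kk
        {y : Ahat A | ∃ k : ℕ, ∃ x ∈ (subLT A 0 : Set (Ahat A)),
          y = fgen A i 0 ^ k * x} : Set (Ahat A)) := by
  refine Set.Subset.antisymm ?_ fun y hy => hT.powMulSubLT_le_map hy
  rintro _ ⟨x, hx, rfl⟩
  have h := hT.map_subLT_le ⟨x, hx, rfl⟩ 1 (mem_powMulSubLT_of_mem_subLT A i (one_mem _))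
  rw [mul_one] at h
  exact h
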